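/- Fix an even integer P ≥ 4, β', γ > 0, θ ∈ (0,1), m̄ ∈ ℝ and 0 ≤ q̄₁ ≤ q̄₂ ≤ 1. Define the 1-RSB pressure of the hard P-spin Sherrington–Kirkpatrick model at noises β₁, β₂ by A_SK^{(P)}(m̄,q₁,q₂;β',β₁,β₂,θ) := ln 2 + θ⁻¹E₁[ln E₂[cosh^θ((P/2)β'm̄^{P−1} + J⁽¹⁾√((P/2)β₁²q₁^{P−1}) + J⁽²⁾√((P/2)(β₂²q₂^{P−1} − β₁²q₁^{P−1})))]] − ((P−1)/2)β'm̄^P + β₂²/4 + θ(P−1)(β₁²/4)q₁^P − P(β₂²/4)q₂^{P−1} + (1−θ)(P−1)(β₂²/4)q₂^P. Then, substituting the conjugate relations p̄₁ = β'q̄₁^{P/2} and p̄₂ = β'q̄₂^{P/2} in the 1-RSB limiting pressure A₁ of the dense Hebbian network, one has A₁(m̄, q̄₁, q̄₂, β'q̄₁^{P/2}, β'q̄₂^{P/2}) = A_SK^{(P)}(m̄, q̄₁, q̄₂; β', β'√γ, β'√γ, θ). In particular, for P > 2 and also in the broken replica-symmetry framework, the dense Hebbian network's quenched pressure is equivalent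 to that of the hard P-spin glass with both noise levels equal to β'√γ, with no soft (Gaussian) spin-glass contribution. -/

import Mathlib

/-!
With `P` even the conjugate choice `p̄ᵢ = β' q̄ᵢ^{P/2}` gives `p̄ᵢ q̄ᵢ^{P/2-1} = β' q̄ᵢ^{P-1}` and
`q̄ᵢ^{P/2} p̄ᵢ = β' q̄ᵢ^P`. The first identity turns the Hebbian effective field into the hard
`P`-spin field with `β₁² = β₂² = β'² γ`, the second (together with `q̄₂^{P-1} q̄₂ = q̄₂^P`) matches
the remaining polynomial terms of the two pressures.
-/

open MeasureTheory ProbabilityTheory Real Filter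

/-- Expectation of `f J` for a standard Gaussian `J ~ N(0,1)`. -/
noncomputable def gExp (f : ℝ → ℝ) : ℝ := ∫ y, f y ∂(gaussianReal 0 1)

/-- Effective field of the 1-RSB dense Hebbian network. -/
noncomputable def gfield (P : ℕ) (β' γ mb qb1 qb2 pb1 pb2 j1 j2 : ℝ) : ℝ :=
  (β' * (P : ℝ) / 2) * mb ^ (P - 1)
    + j1 * Real.sqrt ((β'/2) * γ * pb1 * (P : ℝ) * qb1 ^ (P/2 - 1))
    + j2 * Real.sqrt ((β'/2) * γ * (P : ℝ) * (pb2 * qb2 ^ (P/2 - 1) - pb1 * qb1 ^ (P/2 - 1)))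

/-- 1-RSB limiting pressure of the dense Hebbian network. -/
noncomputable def A1RSB (P : ℕ) (β' γ θ mb qb1 qb2 pb1 pb2 : ℝ) : ℝ :=
  Real.log 2
    + θ⁻¹ * gExp (fun j1 => Real.log (gExp (fun j2 =>
        Real.cosh (gfield P β' γ mb qb1 qb2 pb1 pb2 j1 j2) ^ θ)))
    - (γ * β' / 4) * qb2 ^ (P/2 - 1) * pb2 * ((P : ℝ) - ((P : ℝ) - 1) * qb2)
    + (β'/2) * mb ^ P * (1 - (P : ℝ))
    - θ * ((P : ℝ) - 1) * (β' * γ / 4) * (qb2 ^ (P/2) * pb2 - qb1 ^ (P/2) * pb1)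
    + (1/4) * β' ^ 2 * γ

/-- 1-RSB pressure of the hard P-spin Sherrington–Kirkpatrick model at noises β₁, β₂. -/
noncomputable def A_SK_P_1RSB (P : ℕ) (mb q1 q2 β' β₁ β₂ θ : ℝ) : ℝ :=
  Real.log 2
    + θ⁻¹ * gExp (fun j1 => Real.log (gExp (fun j2 =>
        Real.cosh (((P : ℝ)/2) * β' * mb ^ (P - 1)
          + j1 * Real.sqrt (((P : ℝ)/2) * β₁ ^ 2 * q1 ^ (P - 1))
          + j2 * Real.sqrt (((P : ℝ)/2) * (β₂ ^ 2 * q2 ^ (P - 1) - β₁ ^ 2 * q1 ^ (P - 1)))) ^ θ)))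
    - (((P : ℝ) - 1)/2) * β' * mb ^ P
    + β₂ ^ 2 / 4
    + θ * ((P : ℝ) - 1) * (β₁ ^ 2 / 4) * q1 ^ P
    - (P : ℝ) * (β₂ ^ 2 / 4) * q2 ^ (P - 1)
    + (1 - θ) * ((P : ℝ) - 1) * (β₂ ^ 2 / 4) * q2 ^ P

section EvenPow

variable {M : Type*} [Monoid M] {P : ℕ}

theorem pow_div_two_mul_pow_div_two (hP : Even P) (a : M) : a ^ (P / 2) * a ^ (P / 2) = a ^ P := by
  obtain ⟨k, rfl⟩ := hP
  rw [← pow_add]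
  congr 1
  omega

theorem pow_div_two_mul_pow_div_two_sub_one (hP : Even P) (h2 : 2 ≤ P) (a : M) :
    a ^ (P / 2) * a ^ (P / 2 - 1) = a ^ (P - 1) := by
  obtain ⟨k, rfl⟩ := hP
  rw [← pow_add]
  congr 1
  omega

end EvenPow

theorem gfield_conjugate {P : ℕ} (hPe : Even P) (hP : 2 ≤ P) {γ : ℝ} (hγ : 0 ≤ γ)
    (β' mb q1 q2 j1 j2 : ℝ) :
    gfield P β' γ mb q1 q2 (β' * q1 ^ (P / 2)) (β' * q2 ^ (P / 2)) j1 j2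
      = ((P : ℝ) / 2) * β' * mb ^ (P - 1)
        + j1 * √(((P : ℝ) / 2) * (β' * √γ) ^ 2 * q1 ^ (P - 1))
        + j2 * √(((P : ℝ) / 2) * ((β' * √γ) ^ 2 * q2 ^ (P - 1) - (β' * √γ) ^ 2 * q1 ^ (P - 1))) := by
  have h1 := pow_div_two_mul_pow_div_two_sub_one hPe hP q1
  have h2 := pow_div_two_mul_pow_div_two_sub_one hPe hP q2
  unfold gfield
  rw [mul_pow, sq_sqrt hγ, ← h1, ← h2]
  ring_nf

theorem stmt11_general (P : ℕ) (hPe : Even P) (hP : 4 ≤ P) (β' γ θ : ℝ)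
    (hγ : 0 < γ)
    (mb qb1 qb2 : ℝ) :
    A1RSB P β' γ θ mb qb1 qb2 (β' * qb1 ^ (P/2)) (β' * qb2 ^ (P/2))
      = A_SK_P_1RSB P mb qb1 qb2 β' (β' * Real.sqrt γ) (β' * Real.sqrt γ) θ := by
  have hP2 : 2 ≤ P := by omega
  unfold A1RSB A_SK_P_1RSB
  simp only [gfield_conjugate hPe hP2 hγ.le]
  have hq2 := pow_div_two_mul_pow_div_two_sub_one hPe hP2 qb2
  have hsq1 := pow_div_two_mul_pow_div_two hPe qb1
  have hsq2 := pow_div_two_mul_pow_div_two hPe qb2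
  have hsucc := pow_sub_one_mul (by omega : P ≠ 0) qb2
  rw [mul_pow, sq_sqrt hγ.le]
  set c := β' ^ 2 * γ / 4
  linear_combination (-c * P + c * (P - 1) * qb2) * hq2 + c * (P - 1) * hsucc
    - θ * (P - 1) * c * hsq2 + θ * (P - 1) * c * hsq1

theorem stmt11 (P : ℕ) (hPe : Even P) (hP : 4 ≤ P) (β' γ θ : ℝ)
    (hβ : 0 < β') (hγ : 0 < γ) (hθ : θ ∈ Set.Ioo (0:ℝ) 1)
    (mb qb1 qb2 : ℝ) (hq1 : 0 ≤ qb1) (hq12 : qb1 ≤ qb2) (hq2 : qb2 ≤ 1) :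
    A1RSB P β' γ θ mb qb1 qb2 (β' * qb1 ^ (P/2)) (β' * qb2 ^ (P/2))
      = A_SK_P_1RSB P mb qb1 qb2 β' (β' * Real.sqrt γ) (β' * Real.sqrt γ) θ :=
  stmt11_general P hPe hP β' γ θ hγ mb qb1 qb2
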